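/- arXiv:2204.11362 — 7 statements merged into one kernel-verified Lean document; each statement's English description precedes it below -/
import Mathlib

section
/- If S = V(G) is the full vertex set of a graph G satisfying: (i) G is twin-free, (ii) minimum degree at least 2, (iii) no two adjacent degree-2 vertices, and (iv) every triangle abc has |N[a] △ N[b]| ≥ 3, then S is an error-correcting identifying code, i.e., every vertex v has |N[v]| ≥ 3 and every pair of distinct vertices u,v has |N[u] △ N[v]| ≥ 3. -/
open SimpleGraph

variable {V : Type*}

/-- Closed neighborhood of `v` in `G`. -/
def closedNbhd (G : SimpleGraph V) (v : V) : Set V := insert v (G.neighborSet v)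

/-- `S` is an error-correcting identifying code for `G`. -/
def IsErrIC (G : SimpleGraph V) (S : Set V) : Prop :=
  (∀ v : V, 3 ≤ (closedNbhd G v ∩ S).ncard) ∧
  ∀ u v : V, u ≠ v → 3 ≤ (symmDiff (closedNbhd G u ∩ S) (closedNbhd G v ∩ S)).ncard

/-- `G` has no twins. -/
def TwinFree (G : SimpleGraph V) : Prop :=
  ∀ u v : V, u ≠ v →
    closedNbhd G u ≠ closedNbhd G v ∧ G.neighborSet u ≠ G.neighborSet v

/-!
With `S = V(G)`, a vertex `v` is covered `deg v + 1 ≥ 3` times. For two non-adjacent vertices,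
`N[u] △ N[v]` contains `u`, `v` and the nonempty set `N(u) △ N(v)`. For adjacent `u, v` with a
common neighbour the triangle condition applies directly; without one,
`N[u] △ N[v] = (N(u) - v) ⊔ (N(v) - u)` has `deg u + deg v - 2 ≥ 3` elements, since both
degrees are at least `2` and not both equal to `2`.
-/

section ClosedNbhd

variable {G : SimpleGraph V} {u v x : V}

lemma mem_closedNbhd : x ∈ closedNbhd G v ↔ x = v ∨ G.Adj v x := Iff.rfl

lemma ncard_closedNbhd [Finite V] :
    (closedNbhd G v).ncard = (G.neighborSet v).ncard + 1 :=
  Set.ncard_insert_of_notMem (G.notMem_neighborSet_self (a := v))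

lemma symmDiff_closedNbhd_of_not_adj (huv : u ≠ v) (hadj : ¬G.Adj u v) :
    symmDiff (closedNbhd G u) (closedNbhd G v) =
      insert u (insert v (symmDiff (G.neighborSet u) (G.neighborSet v))) := by
  have hvu : ¬G.Adj v u := fun h => hadj h.symm
  ext x
  simp only [Set.mem_symmDiff, mem_closedNbhd, Set.mem_insert_iff, mem_neighborSet]
  rcases eq_or_ne x u with rfl | hxu
  · simp [huv, hvu]
  rcases eq_or_ne x v with rfl | hxv
  · simp [huv.symm, hadj]
  simp [hxu, hxv]

lemma three_le_ncard_symmDiff_closedNbhd_of_not_adj [Finite V] (huv : u ≠ v)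
    (hadj : ¬G.Adj u v) (hN : G.neighborSet u ≠ G.neighborSet v) :
    3 ≤ (symmDiff (closedNbhd G u) (closedNbhd G v)).ncard := by
  have hu : u ∉ insert v (symmDiff (G.neighborSet u) (G.neighborSet v)) := by
    simpa [huv, Set.mem_symmDiff] using fun h => hadj h.symm
  have hv : v ∉ symmDiff (G.neighborSet u) (G.neighborSet v) := by
    simp [Set.mem_symmDiff, hadj]
  have hpos : 0 < (symmDiff (G.neighborSet u) (G.neighborSet v)).ncard :=
    (Set.ncard_pos).2 (Set.nonempty_iff_ne_empty.2 fun h => hN (symmDiff_eq_bot.1 h))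
  rw [symmDiff_closedNbhd_of_not_adj huv hadj, Set.ncard_insert_of_notMem hu,
    Set.ncard_insert_of_notMem hv]
  omega

lemma symmDiff_closedNbhd_of_adj (hadj : G.Adj u v)
    (hcommon : ∀ w, G.Adj u w → ¬G.Adj v w) :
    symmDiff (closedNbhd G u) (closedNbhd G v) =
      (G.neighborSet u \ {v}) ∪ (G.neighborSet v \ {u}) := by
  ext x
  simp only [Set.mem_symmDiff, mem_closedNbhd, Set.mem_union, Set.mem_sdiff,
    mem_neighborSet, Set.mem_singleton_iff]
  have hx := hcommon x
  rcases eq_or_ne x u with rfl | hxu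
  · simp [hadj.symm]
  rcases eq_or_ne x v with rfl | hxv
  · simp [hadj, hxu]
  simp only [hxu, hxv, false_or, not_false_eq_true, and_true]
  tauto

lemma ncard_symmDiff_closedNbhd_of_adj [Finite V] (hadj : G.Adj u v)
    (hcommon : ∀ w, G.Adj u w → ¬G.Adj v w) :
    (symmDiff (closedNbhd G u) (closedNbhd G v)).ncard + 2 =
      (G.neighborSet u).ncard + (G.neighborSet v).ncard := by
  have hdisj : Disjoint (G.neighborSet u \ {v}) (G.neighborSet v \ {u}) :=
    Set.disjoint_left.2 fun w hu hv => hcommon w hu.1 hv.1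
  have hu := Set.ncard_sdiff_singleton_add_one (s := G.neighborSet u) hadj
  have hv := Set.ncard_sdiff_singleton_add_one (s := G.neighborSet v) hadj.symm
  rw [symmDiff_closedNbhd_of_adj hadj hcommon, Set.ncard_union_eq hdisj]
  omega

end ClosedNbhd

theorem stmt0 [Fintype V] (G : SimpleGraph V)
    (h1 : TwinFree G)
    (h2 : ∀ v : V, 2 ≤ (G.neighborSet v).ncard)
    (h3 : ∀ u v : V, G.Adj u v →
      ¬((G.neighborSet u).ncard = 2 ∧ (G.neighborSet v).ncard = 2))
    (h4 : ∀ a b c : V, G.Adj a b → G.Adj b c → G.Adj a c →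
      3 ≤ (symmDiff (closedNbhd G a) (closedNbhd G b)).ncard) :
    IsErrIC G Set.univ := by
  simp only [IsErrIC, Set.inter_univ]
  refine ⟨fun v => by rw [ncard_closedNbhd]; linarith [h2 v], fun u v huv => ?_⟩
  by_cases hadj : G.Adj u v
  · by_cases hcommon : ∃ w, G.Adj u w ∧ G.Adj v w
    · obtain ⟨w, huw, hvw⟩ := hcommon
      exact h4 u v w hadj hvw huw
    · push Not at hcommon
      have := ncard_symmDiff_closedNbhd_of_adj hadj hcommon
      have := h3 u v hadj
      have := h2 u
      have := h2 v
      omega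
  · exact three_le_ncard_symmDiff_closedNbhd_of_not_adj huv hadj (h1 u v huv).2
end

section
/- A graph G admits an error-correcting identifying code if and only if (i) G is twin-free, (ii) δ(G) ≥ 2, (iii) G has no two adjacent vertices both of degree 2, and (iv) every triangle abc in G satisfies |N[a] △ N[b]| ≥ 3 (for all three pairs of the triangle). -/
/-!
Adding vertices to an error-correcting identifying code keeps it one, so `G` has such a code
iff `V` itself is one, i.e. iff `δ(G) ≥ 2` and `|N[u] △ N[v]| ≥ 3` for all `u ≠ v`.
For non-adjacent `u, v` the symmetric difference is `{u, v}` together with `N(u) △ N(v)`, so the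
condition says they are not open twins. For adjacent `u, v` with a common neighbour it is the
triangle condition; without one, `N[u] ∩ N[v] = {u, v}` and `|N[u] △ N[v]| = deg u + deg v - 2`,
which is at least `3` unless both degrees are `2`.
-/

open SimpleGraph

variable {V : Type*}

lemma Set.ncard_symmDiff_add_two_mul_ncard_inter {α : Type*} {s t : Set α}
    (hs : s.Finite) (ht : t.Finite) :
    (symmDiff s t).ncard + 2 * (s ∩ t).ncard = s.ncard + t.ncard := by
  have hunion : (symmDiff s t).ncard + (s ∩ t).ncard = (s ∪ t).ncard := by
    rw [← Set.ncard_union_eq (t := s ∩ t) (disjoint_symmDiff_inf s t)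
      ((hs.union ht).subset symmDiff_le_sup) (hs.subset Set.inter_subset_left)]
    exact congrArg Set.ncard (symmDiff_sup_inf s t)
  rw [← Set.ncard_union_add_ncard_inter s t hs ht, ← hunion]
  ring

namespace SimpleGraph

variable {G : SimpleGraph V} {u v : V}

lemma mem_closedNbhd {x : V} : x ∈ closedNbhd G v ↔ x = v ∨ G.Adj v x := Iff.rfl

lemma ncard_closedNbhd [Finite V] (v : V) :
    (closedNbhd G v).ncard = (G.neighborSet v).ncard + 1 :=
  Set.ncard_insert_of_notMem (by simp)

lemma IsErrIC.mono [Finite V] {S T : Set V} (h : IsErrIC G S) (hST : S ⊆ T) :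
    IsErrIC G T := by
  refine ⟨fun v => (h.1 v).trans (Set.ncard_le_ncard (Set.inter_subset_inter_right _ hST)),
    fun u v huv => (h.2 u v huv).trans ?_⟩
  rw [← Set.inter_symmDiff_distrib_right, ← Set.inter_symmDiff_distrib_right]
  exact Set.ncard_le_ncard (Set.inter_subset_inter_right _ hST)

lemma exists_isErrIC_iff [Finite V] : (∃ S, IsErrIC G S) ↔ IsErrIC G Set.univ :=
  ⟨fun ⟨_, hS⟩ => hS.mono (Set.subset_univ _), fun h => ⟨_, h⟩⟩

lemma isErrIC_univ_iff [Finite V] :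
    IsErrIC G Set.univ ↔ (∀ v, 2 ≤ (G.neighborSet v).ncard) ∧
      ∀ u v, u ≠ v → 3 ≤ (symmDiff (closedNbhd G u) (closedNbhd G v)).ncard := by
  simp [IsErrIC, ncard_closedNbhd]

lemma pair_subset_closedNbhd_inter (h : G.Adj u v) :
    {u, v} ⊆ closedNbhd G u ∩ closedNbhd G v := by
  rintro x (rfl | rfl)
  · exact ⟨Or.inl rfl, Or.inr h.symm⟩
  · exact ⟨Or.inr h, Or.inl rfl⟩

lemma closedNbhd_inter_eq_pair (h : G.Adj u v) (hc : ∀ w, ¬(G.Adj u w ∧ G.Adj v w)) :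
    closedNbhd G u ∩ closedNbhd G v = {u, v} := by
  refine Set.Subset.antisymm ?_ (pair_subset_closedNbhd_inter h)
  rintro x ⟨rfl | hux, rfl | hvx⟩
  all_goals first
    | exact Or.inl rfl | exact Or.inr rfl | exact absurd ⟨hux, hvx⟩ (hc x)

lemma ncard_symmDiff_closedNbhd_add_two_le [Finite V] (h : G.Adj u v) :
    (symmDiff (closedNbhd G u) (closedNbhd G v)).ncard + 2 ≤
      (G.neighborSet u).ncard + (G.neighborSet v).ncard := by
  have key := Set.ncard_symmDiff_add_two_mul_ncard_inter
    (Set.toFinite (closedNbhd G u)) (Set.toFinite (closedNbhd G v))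
  have := Set.ncard_le_ncard (pair_subset_closedNbhd_inter h)
  rw [Set.ncard_pair h.ne, ncard_closedNbhd, ncard_closedNbhd] at *
  omega

lemma ncard_symmDiff_closedNbhd_add_two [Finite V] (h : G.Adj u v)
    (hc : ∀ w, ¬(G.Adj u w ∧ G.Adj v w)) :
    (symmDiff (closedNbhd G u) (closedNbhd G v)).ncard + 2 =
      (G.neighborSet u).ncard + (G.neighborSet v).ncard := by
  have key := Set.ncard_symmDiff_add_two_mul_ncard_inter
    (Set.toFinite (closedNbhd G u)) (Set.toFinite (closedNbhd G v))
  rw [closedNbhd_inter_eq_pair h hc, Set.ncard_pair h.ne, ncard_closedNbhd,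
    ncard_closedNbhd] at key
  omega

lemma symmDiff_closedNbhd_of_not_adj (huv : u ≠ v) (h : ¬G.Adj u v) :
    symmDiff (closedNbhd G u) (closedNbhd G v) =
      insert u (insert v (symmDiff (G.neighborSet u) (G.neighborSet v))) := by
  have hvu : ¬G.Adj v u := fun h' => h h'.symm
  ext x
  simp only [Set.mem_symmDiff, mem_closedNbhd, Set.mem_insert_iff, mem_neighborSet]
  by_cases hxu : x = u
  · subst hxu
    simp [huv, hvu]
  by_cases hxv : x = v
  · subst hxv
    simp [huv.symm, h]
  simp only [hxu, hxv, false_or]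

lemma three_le_ncard_symmDiff_closedNbhd_iff_of_not_adj [Finite V] (huv : u ≠ v)
    (h : ¬G.Adj u v) :
    3 ≤ (symmDiff (closedNbhd G u) (closedNbhd G v)).ncard ↔
      G.neighborSet u ≠ G.neighborSet v := by
  have hu : u ∉ insert v (symmDiff (G.neighborSet u) (G.neighborSet v)) := by
    simp [huv, Set.mem_symmDiff, G.adj_comm v u, h]
  have hv : v ∉ symmDiff (G.neighborSet u) (G.neighborSet v) := by
    simp [Set.mem_symmDiff, h]
  rw [symmDiff_closedNbhd_of_not_adj huv h, Set.ncard_insert_of_notMem hu,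
    Set.ncard_insert_of_notMem hv, ← Set.symmDiff_nonempty, ← Set.ncard_pos]
  omega

lemma forall_three_le_ncard_symmDiff_closedNbhd_iff [Finite V]
    (hdeg : ∀ v, 2 ≤ (G.neighborSet v).ncard) :
    (∀ u v, u ≠ v → 3 ≤ (symmDiff (closedNbhd G u) (closedNbhd G v)).ncard) ↔
      TwinFree G ∧
      (∀ u v, G.Adj u v → ¬((G.neighborSet u).ncard = 2 ∧ (G.neighborSet v).ncard = 2)) ∧
      (∀ a b c, G.Adj a b → G.Adj b c → G.Adj a c →
        3 ≤ (symmDiff (closedNbhd G a) (closedNbhd G b)).ncard) := by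
  constructor
  · intro hsep
    refine ⟨fun u v huv => ⟨fun heq => ?_, fun heq => ?_⟩, fun u v hadj hdeg2 => ?_,
      fun a b _ hab _ _ => hsep a b hab.ne⟩
    · simpa [heq] using hsep u v huv
    · have hnadj : ¬G.Adj u v := fun hadj => G.irrefl ((Set.ext_iff.1 heq v).1 hadj)
      exact (three_le_ncard_symmDiff_closedNbhd_iff_of_not_adj huv hnadj).1 (hsep u v huv) heq
    · have := ncard_symmDiff_closedNbhd_add_two_le hadj
      have := hsep u v hadj.ne
      omega
  · rintro ⟨htf, hdeg2, htri⟩ u v huv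
    by_cases hadj : G.Adj u v
    · by_cases hc : ∃ w, G.Adj u w ∧ G.Adj v w
      · obtain ⟨w, huw, hvw⟩ := hc
        exact htri u v w hadj hvw huw
      · have := ncard_symmDiff_closedNbhd_add_two hadj (not_exists.1 hc)
        have := hdeg u
        have := hdeg v
        have := hdeg2 u v hadj
        omega
    · exact (three_le_ncard_symmDiff_closedNbhd_iff_of_not_adj huv hadj).2 (htf u v huv).2

end SimpleGraph

theorem stmt1 [Fintype V] (G : SimpleGraph V) :
    (∃ S : Set V, IsErrIC G S) ↔
      (TwinFree G ∧
       (∀ v : V, 2 ≤ (G.neighborSet v).ncard) ∧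
       (∀ u v : V, G.Adj u v →
         ¬((G.neighborSet u).ncard = 2 ∧ (G.neighborSet v).ncard = 2)) ∧
       (∀ a b c : V, G.Adj a b → G.Adj b c → G.Adj a c →
         3 ≤ (symmDiff (closedNbhd G a) (closedNbhd G b)).ncard)) := by
  rw [exists_isErrIC_iff, isErrIC_univ_iff]
  constructor
  · rintro ⟨hdeg, hsep⟩
    obtain ⟨htf, hrest⟩ := (forall_three_le_ncard_symmDiff_closedNbhd_iff hdeg).1 hsep
    exact ⟨htf, hdeg, hrest⟩
  · rintro ⟨htf, hdeg, hrest⟩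
    exact ⟨hdeg, (forall_three_le_ncard_symmDiff_closedNbhd_iff hdeg).2 ⟨htf, hrest⟩⟩
end

section
/- No cycle graph C_n (n ≥ 3) admits an error-correcting identifying code. -/
open SimpleGraph

variable {V : Type*}

/-!
A closed neighbourhood with at most three vertices can only be 3-dominated if it lies
entirely inside the code. In a graph of maximum degree two, two adjacent vertices `u`, `v`
have closed neighbourhoods `{u, v, a}` and `{u, v, b}`, so after intersecting with the code
they still differ in at most the two vertices `a`, `b`, and cannot be 3-distinguished.
Every cycle has such an edge.
-/

section ErrorCorrectingCode

variable [Finite V] {G : SimpleGraph V} {S : Set V}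

lemma closedNbhd_subset_of_isErrIC (hS : IsErrIC G S) {v : V}
    (hv : (closedNbhd G v).ncard ≤ 3) : closedNbhd G v ⊆ S :=
  Set.inter_eq_left.mp <| Set.eq_of_subset_of_ncard_le Set.inter_subset_left (hv.trans (hS.1 v))

lemma ncard_symmDiff_closedNbhd_le_two {u v : V} (huv : G.Adj u v)
    (hu : (closedNbhd G u).ncard ≤ 3) (hv : (closedNbhd G v).ncard ≤ 3) :
    (symmDiff (closedNbhd G u) (closedNbhd G v)).ncard ≤ 2 := by
  have hpair : ({u, v} : Set V).ncard = 2 := Set.ncard_pair huv.ne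
  have hu' : {u, v} ⊆ closedNbhd G u := by
    simp [closedNbhd, Set.insert_subset_iff, huv]
  have hv' : {u, v} ⊆ closedNbhd G v := by
    simp [closedNbhd, Set.insert_subset_iff, huv.symm]
  have hsub : symmDiff (closedNbhd G u) (closedNbhd G v) ⊆
      (closedNbhd G u \ {u, v}) ∪ (closedNbhd G v \ {u, v}) := by
    rintro w (⟨hwu, hwv⟩ | ⟨hwv, hwu⟩)
    · exact .inl ⟨hwu, fun hw => hwv (hv' hw)⟩
    · exact .inr ⟨hwv, fun hw => hwu (hu' hw)⟩
  calc (symmDiff (closedNbhd G u) (closedNbhd G v)).ncard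
      ≤ ((closedNbhd G u \ {u, v}) ∪ (closedNbhd G v \ {u, v})).ncard := Set.ncard_le_ncard hsub
    _ ≤ (closedNbhd G u \ {u, v}).ncard + (closedNbhd G v \ {u, v}).ncard := Set.ncard_union_le _ _
    _ ≤ 2 := by rw [Set.ncard_sdiff hu', Set.ncard_sdiff hv']; omega

lemma not_isErrIC_of_adj {u v : V} (huv : G.Adj u v)
    (hu : (closedNbhd G u).ncard ≤ 3) (hv : (closedNbhd G v).ncard ≤ 3) : ¬IsErrIC G S := by
  intro hS
  have hdist := hS.2 u v huv.ne
  rw [Set.inter_eq_left.mpr (closedNbhd_subset_of_isErrIC hS hu),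
    Set.inter_eq_left.mpr (closedNbhd_subset_of_isErrIC hS hv)] at hdist
  have := ncard_symmDiff_closedNbhd_le_two huv hu hv
  omega

end ErrorCorrectingCode

lemma ncard_closedNbhd_cycleGraph_le {n : ℕ} (v : Fin (n + 2)) :
    (closedNbhd (cycleGraph (n + 2)) v).ncard ≤ 3 :=
  calc (closedNbhd (cycleGraph (n + 2)) v).ncard
      ≤ ((cycleGraph (n + 2)).neighborSet v).ncard + 1 := Set.ncard_insert_le _ _
    _ ≤ 3 := by
      rw [cycleGraph_neighborSet]
      linarith [Set.ncard_insert_le (v - 1) ({v + 1} : Set (Fin (n + 2))),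
        Set.ncard_singleton (v + 1)]

theorem stmt6 (n : ℕ) (hn : 3 ≤ n) :
    ¬∃ S : Set (Fin n), IsErrIC (SimpleGraph.cycleGraph n) S := by
  obtain ⟨m, rfl⟩ : ∃ m, n = m + 2 := ⟨n - 2, by omega⟩
  have hadj : (cycleGraph (m + 2)).Adj 0 1 := cycleGraph_adj.mpr (.inr (sub_zero 1))
  rintro ⟨S, hS⟩
  exact not_isErrIC_of_adj hadj (ncard_closedNbhd_cycleGraph_le 0)
    (ncard_closedNbhd_cycleGraph_le 1) hS
end

section
/- Let G be a cubic graph, S an error-correcting identifying code for G, and v a vertex not in S. Then every vertex u ≠ v with d(u,v) ≤ 3 belongs to S. -/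
open SimpleGraph

variable {V : Type*}

/-! In a cubic graph every closed neighbourhood has four vertices, at least three of them in the
code, so it contains at most one non-code vertex; this settles distances `1` and `2`. For a path
`u - a - b - v` of non-code ends, the closed neighbourhoods of `a` and `b` share `a` and `b`, and
each has only one further vertex that lies in the code and not in the other, so `a` and `b` are
distinguished by at most two code vertices. -/

section

variable {G : SimpleGraph V} {w : V}

lemma mem_closedNbhd_self (G : SimpleGraph V) (w : V) : w ∈ closedNbhd G w :=
  Set.mem_insert _ _

lemma mem_closedNbhd_of_adj {x : V} (h : G.Adj w x) : x ∈ closedNbhd G w :=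
  Set.mem_insert_of_mem _ h

lemma closedNbhd_finite (hw : (G.neighborSet w).ncard = 3) : (closedNbhd G w).Finite :=
  (Set.finite_of_ncard_ne_zero (by omega)).insert w

lemma ncard_closedNbhd_s13 (hw : (G.neighborSet w).ncard = 3) : (closedNbhd G w).ncard = 4 := by
  rw [closedNbhd, Set.ncard_insert_of_notMem (G.notMem_neighborSet_self (a := w))
    (Set.finite_of_ncard_ne_zero (by omega)), hw]

lemma ncard_closedNbhd_sdiff_triple_eq_one (hw : (G.neighborSet w).ncard = 3) {x y z : V}
    (hx : x ∈ closedNbhd G w) (hy : y ∈ closedNbhd G w) (hz : z ∈ closedNbhd G w)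
    (hxy : x ≠ y) (hxz : x ≠ z) (hyz : y ≠ z) : (closedNbhd G w \ {x, y, z}).ncard = 1 := by
  have htriple : ({x, y, z} : Set V).ncard = 3 := Set.ncard_eq_three.2 ⟨x, y, z, hxy, hxz, hyz, rfl⟩
  have hsub : ({x, y, z} : Set V) ⊆ closedNbhd G w := by
    rintro t (rfl | rfl | rfl) <;> assumption
  rw [Set.ncard_sdiff hsub (Set.toFinite _), ncard_closedNbhd_s13 hw, htriple]

variable {S : Set V}

lemma IsErrIC.ncard_closedNbhd_sdiff_le_one (hS : IsErrIC G S)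
    (hw : (G.neighborSet w).ncard = 3) : (closedNbhd G w \ S).ncard ≤ 1 := by
  have hsplit := Set.ncard_inter_add_ncard_sdiff_eq_ncard (closedNbhd G w) S (closedNbhd_finite hw)
  have hcode := hS.1 w
  rw [ncard_closedNbhd_s13 hw] at hsplit
  omega

lemma IsErrIC.eq_of_mem_closedNbhd_of_notMem (hS : IsErrIC G S)
    (hw : (G.neighborSet w).ncard = 3) {x y : V} (hx : x ∈ closedNbhd G w)
    (hy : y ∈ closedNbhd G w) (hxS : x ∉ S) (hyS : y ∉ S) : x = y :=
  (Set.ncard_le_one (closedNbhd_finite hw).sdiff).1 (hS.ncard_closedNbhd_sdiff_le_one hw)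
    x ⟨hx, hxS⟩ y ⟨hy, hyS⟩

lemma sdiff_inter_closedNbhd_subset {a b x : V} (hab : G.Adj a b) (hx : x ∈ closedNbhd G b)
    (hxS : x ∉ S) :
    (closedNbhd G b ∩ S) \ (closedNbhd G a ∩ S) ⊆ closedNbhd G b \ {a, b, x} := by
  rintro t ⟨⟨htb, htS⟩, hta⟩
  refine ⟨htb, ?_⟩
  rintro (rfl | rfl | rfl)
  · exact hta ⟨mem_closedNbhd_self G t, htS⟩
  · exact hta ⟨mem_closedNbhd_of_adj hab, htS⟩
  · exact hxS htS

lemma IsErrIC.false_of_path_three (hS : IsErrIC G S) {u a b v : V}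
    (ha : (G.neighborSet a).ncard = 3) (hb : (G.neighborSet b).ncard = 3)
    (hua : G.Adj u a) (hab : G.Adj a b) (hbv : G.Adj b v) (hav : a ≠ v) (hbu : b ≠ u)
    (huS : u ∉ S) (hvS : v ∉ S) : False := by
  have hb_sdiff : (closedNbhd G b \ {a, b, v}).ncard = 1 :=
    ncard_closedNbhd_sdiff_triple_eq_one hb (mem_closedNbhd_of_adj hab.symm)
      (mem_closedNbhd_self G b) (mem_closedNbhd_of_adj hbv) (G.ne_of_adj hab) hav (G.ne_of_adj hbv)
  have ha_sdiff : (closedNbhd G a \ {b, a, u}).ncard = 1 :=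
    ncard_closedNbhd_sdiff_triple_eq_one ha (mem_closedNbhd_of_adj hab)
      (mem_closedNbhd_self G a) (mem_closedNbhd_of_adj hua.symm) (G.ne_of_adj hab).symm hbu
      (G.ne_of_adj hua).symm
  have hsymm : symmDiff (closedNbhd G b ∩ S) (closedNbhd G a ∩ S) ⊆
      (closedNbhd G b \ {a, b, v}) ∪ (closedNbhd G a \ {b, a, u}) := by
    rw [Set.symmDiff_def]
    exact Set.union_subset_union
      (sdiff_inter_closedNbhd_subset hab (mem_closedNbhd_of_adj hbv) hvS)
      (sdiff_inter_closedNbhd_subset hab.symm (mem_closedNbhd_of_adj hua.symm) huS)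
  have hfin : ((closedNbhd G b \ {a, b, v}) ∪ (closedNbhd G a \ {b, a, u})).Finite :=
    (Set.finite_of_ncard_ne_zero (by omega)).union (Set.finite_of_ncard_ne_zero (by omega))
  have hle := (Set.ncard_le_ncard hsymm hfin).trans (Set.ncard_union_le _ _)
  have hdist := hS.2 b a (G.ne_of_adj hab).symm
  omega

end

theorem stmt13 (G : SimpleGraph V)
    (hreg : ∀ v : V, (G.neighborSet v).ncard = 3)
    (S : Set V) (hS : IsErrIC G S) (v : V) (hv : v ∉ S) :
    ∀ u : V, u ≠ v → G.edist u v ≤ 3 → u ∈ S := by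
  intro u huv hd
  obtain ⟨p, hp⟩ := G.exists_walk_of_edist_ne_top (ne_top_of_le_ne_top (by simp) hd)
  have hlen : p.length ≤ 3 := by exact_mod_cast hp ▸ hd
  by_contra hu
  have hnear {w : V} (hu' : u ∈ closedNbhd G w) (hv' : v ∈ closedNbhd G w) : False :=
    huv (hS.eq_of_mem_closedNbhd_of_notMem (hreg w) hu' hv' hu hv)
  match p, hlen with
  | .nil, _ => exact huv rfl
  | .cons hua .nil, _ => exact hnear (mem_closedNbhd_self G u) (mem_closedNbhd_of_adj hua)
  | .cons hua (.cons hwv .nil), _ =>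
    exact hnear (mem_closedNbhd_of_adj hua.symm) (mem_closedNbhd_of_adj hwv)
  | .cons (v := a) hua (.cons (v := b) hab (.cons hbv .nil)), _ =>
    rcases eq_or_ne a v with rfl | hav
    · exact hnear (mem_closedNbhd_of_adj hua.symm) (mem_closedNbhd_self G a)
    rcases eq_or_ne b u with rfl | hbu
    · exact hnear (mem_closedNbhd_self G b) (mem_closedNbhd_of_adj hbv)
    exact hS.false_of_path_three (hreg a) (hreg b) hua hab hbv hav hbu hu hv
end

section
/- If G is a twin-free, triangle-free cubic graph and v ∈ V(G), then S = V(G) − {v} is an error-correcting identifying code for G. -/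
/-!
Removing one vertex from a set loses at most one element, so it suffices that every closed
neighbourhood has 4 vertices and any two distinct ones differ in at least 4. Two adjacent
vertices share only themselves (no triangles), and two non-adjacent ones share only common
neighbours, of which there are at most 2 (no open twins). Hence `|N[u] ∩ N[w]| ≤ 2` and
`|N[u] ∆ N[w]| = 4 + 4 - 2 |N[u] ∩ N[w]| ≥ 4`.
-/

open SimpleGraph
open scoped symmDiff

variable {V : Type*}

namespace Set

variable {α : Type*} {s t : Set α}

theorem ncard_symmDiff_add_two_mul_ncard_inter_s15 (hs : s.Finite) (ht : t.Finite) :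
    (s ∆ t).ncard + 2 * (s ∩ t).ncard = s.ncard + t.ncard := by
  have hsub : s ∩ t ⊆ s ∪ t := inter_subset_left.trans subset_union_left
  rw [symmDiff_eq_sup_sdiff_inf, ← ncard_union_add_ncard_inter s t hs ht]
  have := ncard_sdiff_add_ncard_of_subset hsub (hs.union ht)
  simp only [sup_eq_union, inf_eq_inter] at this ⊢
  omega

theorem ncard_inter_lt_of_ne (hs : s.Finite) (ht : t.Finite) (hst : s.ncard = t.ncard)
    (hne : s ≠ t) : (s ∩ t).ncard < s.ncard := by
  by_contra! hle
  have hs_eq : s ∩ t = s := eq_of_subset_of_ncard_le inter_subset_left hle hs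
  have ht_eq : s ∩ t = t := eq_of_subset_of_ncard_le inter_subset_right (hst ▸ hle) ht
  exact hne (hs_eq.symm.trans ht_eq)

end Set

section ClosedNbhd

variable {G : SimpleGraph V} {u w : V}

theorem closedNbhd_inter_closedNbhd_of_adj (htri : G.CliqueFree 3) (h : G.Adj u w) :
    closedNbhd G u ∩ closedNbhd G w = {u, w} := by
  classical
  ext x
  simp only [closedNbhd, Set.mem_inter_iff, Set.mem_insert_iff, mem_neighborSet,
    Set.mem_singleton_iff]
  constructor
  · rintro ⟨rfl | hux, rfl | hwx⟩
    · exact Or.inl rfl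
    · exact Or.inl rfl
    · exact Or.inr rfl
    · exact (htri {u, w, x} (is3Clique_triple_iff.mpr ⟨h, hux, hwx⟩)).elim
  · rintro (rfl | rfl)
    · exact ⟨Or.inl rfl, Or.inr h.symm⟩
    · exact ⟨Or.inr h, Or.inl rfl⟩

theorem closedNbhd_inter_closedNbhd_of_not_adj (huw : u ≠ w) (h : ¬G.Adj u w) :
    closedNbhd G u ∩ closedNbhd G w = G.commonNeighbors u w := by
  ext x
  simp only [closedNbhd, commonNeighbors_eq, Set.mem_inter_iff, Set.mem_insert_iff,
    mem_neighborSet]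
  constructor
  · rintro ⟨rfl | hux, rfl | hwx⟩
    · exact (huw rfl).elim
    · exact (h hwx.symm).elim
    · exact (h hux).elim
    · exact ⟨hux, hwx⟩
  · rintro ⟨hux, hwx⟩
    exact ⟨Or.inr hux, Or.inr hwx⟩

variable (hreg : ∀ v : V, (G.neighborSet v).ncard = 3)
include hreg

theorem finite_neighborSet_of_cubic (u : V) : (G.neighborSet u).Finite :=
  Set.finite_of_ncard_ne_zero (by rw [hreg u]; decide)

theorem ncard_closedNbhd_of_cubic (u : V) : (closedNbhd G u).ncard = 4 := by
  rw [closedNbhd, Set.ncard_insert_of_notMem (by simp) (finite_neighborSet_of_cubic hreg u),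
    hreg u]

theorem ncard_closedNbhd_inter_le_two_of_cubic (htri : G.CliqueFree 3) (huw : u ≠ w)
    (hne : G.neighborSet u ≠ G.neighborSet w) :
    (closedNbhd G u ∩ closedNbhd G w).ncard ≤ 2 := by
  by_cases hadj : G.Adj u w
  · rw [closedNbhd_inter_closedNbhd_of_adj htri hadj]
    exact (Set.ncard_insert_le _ _).trans (by simp)
  · rw [closedNbhd_inter_closedNbhd_of_not_adj huw hadj, commonNeighbors_eq]
    have := Set.ncard_inter_lt_of_ne (finite_neighborSet_of_cubic hreg u)
      (finite_neighborSet_of_cubic hreg w) ((hreg u).trans (hreg w).symm) hne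
    rw [hreg u] at this
    omega

theorem four_le_ncard_symmDiff_closedNbhd_of_cubic (htri : G.CliqueFree 3) (huw : u ≠ w)
    (hne : G.neighborSet u ≠ G.neighborSet w) :
    4 ≤ (closedNbhd G u ∆ closedNbhd G w).ncard := by
  have hcount := Set.ncard_symmDiff_add_two_mul_ncard_inter_s15 (s := closedNbhd G u)
    (t := closedNbhd G w) ((finite_neighborSet_of_cubic hreg u).insert u)
    ((finite_neighborSet_of_cubic hreg w).insert w)
  have hinter := ncard_closedNbhd_inter_le_two_of_cubic hreg htri huw hne
  rw [ncard_closedNbhd_of_cubic hreg, ncard_closedNbhd_of_cubic hreg] at hcount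
  omega

end ClosedNbhd

theorem stmt15 (G : SimpleGraph V)
    (hreg : ∀ v : V, (G.neighborSet v).ncard = 3)
    (htwin : TwinFree G) (htri : G.CliqueFree 3) (v : V) :
    IsErrIC G ({v}ᶜ : Set V) := by
  constructor
  · intro u
    have hdel := Set.pred_ncard_le_ncard_sdiff_singleton (closedNbhd G u) v
    rw [ncard_closedNbhd_of_cubic hreg] at hdel
    rw [← Set.sdiff_eq]
    omega
  · intro u w huw
    have hdel := Set.pred_ncard_le_ncard_sdiff_singleton (closedNbhd G u ∆ closedNbhd G w) v
    have hsep := four_le_ncard_symmDiff_closedNbhd_of_cubic hreg htri huw (htwin u w huw).2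
    rw [← Set.inter_symmDiff_distrib_right, ← Set.sdiff_eq]
    omega
end

section
/- If S is an error-correcting identifying code for a finite cubic graph G on n vertices, then |S| ≥ (5/6) n. -/
/-!
Call a vertex *tight* when its closed neighbourhood meets the code `S` in exactly three vertices
(the minimum); all other vertices meet it in four, and every vertex outside the code is tight.
Counting incidences gives `4|S| + |T| = 4n` for the set `T` of tight vertices, so it suffices to
show `5|T| ≤ 4|S|`.

Two tight vertices share at most one code vertex, since their traces on the code have size three
and a symmetric difference of size at least three. Hence tight code vertices are pairwise
nonadjacent, each sees exactly two tight vertices (itself and a non-code neighbour), and every code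
vertex sees at most three. A code vertex `s` seeing three tight vertices (the set `S₃`) is not
tight, so all its neighbours are tight code vertices, while a tight code vertex has at most two
vertices of `S₃` around it. Double counting gives `3|S₃| ≤ 2|S ∩ T| ≤ 2|S \ S₃|`, and with
`3|T| = ∑_{s ∈ S} |N[s] ∩ T| ≤ 3|S₃| + 2|S \ S₃|` this yields `5|T| ≤ 4|S|`.
-/

open SimpleGraph

variable {V : Type*}

open Finset
open scoped symmDiff

theorem Finset.card_symmDiff_add_two_mul_card_inter [DecidableEq V] (s t : Finset V) :
    #(s ∆ t) + 2 * #(s ∩ t) = #s + #t := by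
  rw [symmDiff_eq_sup_sdiff_inf, sup_eq_union, inf_eq_inter,
    card_sdiff_of_subset (inter_subset_left.trans subset_union_left), ← card_union_add_card_inter]
  have := card_le_card (inter_subset_union (s := s) (t := t))
  omega

section ClosedNbhd

variable [Fintype V] [DecidableEq V] (G : SimpleGraph V) [DecidableRel G.Adj]

def closedNbhdFinset (v : V) : Finset V := insert v (G.neighborFinset v)

variable {G}

theorem mem_closedNbhdFinset {u v : V} : u ∈ closedNbhdFinset G v ↔ u = v ∨ G.Adj v u := by
  simp [closedNbhdFinset]

theorem self_mem_closedNbhdFinset (v : V) : v ∈ closedNbhdFinset G v :=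
  mem_insert_self _ _

theorem mem_closedNbhdFinset_comm {u v : V} :
    u ∈ closedNbhdFinset G v ↔ v ∈ closedNbhdFinset G u := by
  simp only [mem_closedNbhdFinset, eq_comm, G.adj_comm]

theorem coe_closedNbhdFinset (v : V) : (closedNbhdFinset G v : Set V) = closedNbhd G v := by
  simp [closedNbhdFinset, closedNbhd]

theorem card_closedNbhdFinset (v : V) : #(closedNbhdFinset G v) = G.degree v + 1 := by
  rw [closedNbhdFinset, card_insert_of_notMem (by simp), card_neighborFinset_eq_degree]

theorem sum_card_closedNbhdFinset_inter_comm (A B : Finset V) :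
    ∑ a ∈ A, #(closedNbhdFinset G a ∩ B) = ∑ b ∈ B, #(closedNbhdFinset G b ∩ A) := by
  simp only [inter_comm _ A, inter_comm _ B, ← filter_mem_eq_inter, card_filter]
  rw [sum_comm]
  simp only [mem_closedNbhdFinset_comm]

theorem isErrIC_coe_iff {S : Finset V} :
    IsErrIC G S ↔ (∀ v, 3 ≤ #(closedNbhdFinset G v ∩ S)) ∧
      ∀ u v, u ≠ v → 3 ≤ #((closedNbhdFinset G u ∩ S) ∆ (closedNbhdFinset G v ∩ S)) := by
  simp only [IsErrIC, ← coe_closedNbhdFinset, ← coe_inter, ← coe_symmDiff, Set.ncard_coe_finset]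

end ClosedNbhd

section CubicCode

variable [Fintype V] [DecidableEq V] {G : SimpleGraph V} [DecidableRel G.Adj] {S : Finset V}

variable (G) in
def tightSet (S : Finset V) : Finset V := {v | #(closedNbhdFinset G v ∩ S) = 3}

theorem mem_tightSet {v : V} : v ∈ tightSet G S ↔ #(closedNbhdFinset G v ∩ S) = 3 := by
  simp [tightSet]

theorem card_closedNbhdFinset_inter_le (hreg : G.IsRegularOfDegree 3) (v : V) :
    #(closedNbhdFinset G v ∩ S) ≤ 4 :=
  (card_le_card inter_subset_left).trans (by rw [card_closedNbhdFinset, hreg v])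

theorem card_tightSet_add_four_mul_card (hreg : G.IsRegularOfDegree 3)
    (hdom : ∀ v, 3 ≤ #(closedNbhdFinset G v ∩ S)) :
    #(tightSet G S) + 4 * #S = 4 * Fintype.card V := by
  have hcount : ∀ v, (if v ∈ tightSet G S then 1 else 0) + #(closedNbhdFinset G v ∩ S) = 4 := by
    intro v
    have := card_closedNbhdFinset_inter_le hreg (S := S) v
    have := hdom v
    split_ifs with h <;> rw [mem_tightSet] at h <;> omega
  have hsum : ∑ v, #(closedNbhdFinset G v ∩ S) = 4 * #S := by
    rw [sum_card_closedNbhdFinset_inter_comm]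
    simp [card_closedNbhdFinset, hreg _, mul_comm]
  calc #(tightSet G S) + 4 * #S
      = ∑ v, ((if v ∈ tightSet G S then 1 else 0) + #(closedNbhdFinset G v ∩ S)) := by
        rw [sum_add_distrib, sum_boole, filter_mem_eq_inter, univ_inter, hsum, Nat.cast_id]
    _ = 4 * Fintype.card V := by simp [hcount, mul_comm]

theorem mem_tightSet_of_notMem (hreg : G.IsRegularOfDegree 3)
    (hdom : ∀ v, 3 ≤ #(closedNbhdFinset G v ∩ S)) {v : V} (hv : v ∉ S) : v ∈ tightSet G S := by
  have hsub : closedNbhdFinset G v ∩ S ⊆ (closedNbhdFinset G v).erase v :=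
    fun x hx => mem_erase.2 ⟨fun h => hv (h ▸ (mem_inter.1 hx).2), (mem_inter.1 hx).1⟩
  have := card_le_card hsub
  rw [card_erase_of_mem (self_mem_closedNbhdFinset v), card_closedNbhdFinset, hreg v] at this
  have := hdom v
  rw [mem_tightSet]
  omega

theorem exists_notMem_of_mem_tightSet (hreg : G.IsRegularOfDegree 3) {v : V}
    (hv : v ∈ tightSet G S) : ∃ q ∈ closedNbhdFinset G v, q ∉ S := by
  obtain ⟨q, hq, hqS⟩ := exists_mem_notMem_of_card_lt_card (s := closedNbhdFinset G v ∩ S)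
    (t := closedNbhdFinset G v) (by rw [mem_tightSet.1 hv, card_closedNbhdFinset, hreg v]; omega)
  exact ⟨q, hq, fun h => hqS (mem_inter.2 ⟨hq, h⟩)⟩

theorem card_inter_inter_le_one_of_mem_tightSet
    (hsep : ∀ u v, u ≠ v →
      3 ≤ #((closedNbhdFinset G u ∩ S) ∆ (closedNbhdFinset G v ∩ S)))
    {u v : V} (huv : u ≠ v) (hu : u ∈ tightSet G S) (hv : v ∈ tightSet G S) :
    #((closedNbhdFinset G u ∩ S) ∩ (closedNbhdFinset G v ∩ S)) ≤ 1 := by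
  have := card_symmDiff_add_two_mul_card_inter (closedNbhdFinset G u ∩ S) (closedNbhdFinset G v ∩ S)
  rw [mem_tightSet.1 hu, mem_tightSet.1 hv] at this
  have := hsep u v huv
  omega

theorem not_adj_of_mem_tightSet
    (hsep : ∀ u v, u ≠ v →
      3 ≤ #((closedNbhdFinset G u ∩ S) ∆ (closedNbhdFinset G v ∩ S)))
    {u v : V} (huS : u ∈ S) (hvS : v ∈ S) (hu : u ∈ tightSet G S) (hv : v ∈ tightSet G S) :
    ¬ G.Adj u v := by
  intro huv
  have hsub : {u, v} ⊆ (closedNbhdFinset G u ∩ S) ∩ (closedNbhdFinset G v ∩ S) := by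
    simp [insert_subset_iff, mem_closedNbhdFinset, huS, hvS, huv, huv.symm]
  have := card_le_card hsub
  rw [card_pair huv.ne] at this
  have := card_inter_inter_le_one_of_mem_tightSet hsep huv.ne hu hv
  omega

theorem card_closedNbhdFinset_inter_tightSet_of_mem (hreg : G.IsRegularOfDegree 3)
    (hdom : ∀ v, 3 ≤ #(closedNbhdFinset G v ∩ S))
    (hsep : ∀ u v, u ≠ v →
      3 ≤ #((closedNbhdFinset G u ∩ S) ∆ (closedNbhdFinset G v ∩ S)))
    {v : V} (hvS : v ∈ S) (hv : v ∈ tightSet G S) :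
    #(closedNbhdFinset G v ∩ tightSet G S) = 2 := by
  apply le_antisymm
  · -- `v` is the only tight code vertex in `N[v]`, so `|N[v] ∩ T| + |N[v] ∩ S| ≤ 4 + 1`
    have hsub : (closedNbhdFinset G v ∩ tightSet G S) ∩ (closedNbhdFinset G v ∩ S) ⊆ {v} := by
      intro u hu
      simp only [mem_inter, mem_closedNbhdFinset] at hu
      obtain ⟨⟨huv | hadj, hu⟩, -, huS⟩ := hu
      · exact mem_singleton.2 huv
      · exact absurd hadj (not_adj_of_mem_tightSet hsep hvS huS hv hu)
    have hunion := card_le_card (union_subset (s := closedNbhdFinset G v ∩ tightSet G S)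
      (t := closedNbhdFinset G v ∩ S) inter_subset_left inter_subset_left)
    have := card_union_add_card_inter (closedNbhdFinset G v ∩ tightSet G S)
      (closedNbhdFinset G v ∩ S)
    rw [card_closedNbhdFinset, hreg v] at hunion
    have := card_le_card hsub
    rw [card_singleton] at this
    have := mem_tightSet.1 hv
    omega
  · obtain ⟨q, hq, hqS⟩ := exists_notMem_of_mem_tightSet hreg hv
    have hqv : q ≠ v := fun h => hqS (h ▸ hvS)
    have hsub : {q, v} ⊆ closedNbhdFinset G v ∩ tightSet G S := by
      simp [insert_subset_iff, hq, self_mem_closedNbhdFinset, hv,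
        mem_tightSet_of_notMem hreg hdom hqS]
    simpa [card_pair hqv] using card_le_card hsub

theorem closedNbhdFinset_subset_of_notMem_tightSet (hreg : G.IsRegularOfDegree 3)
    (hdom : ∀ v, 3 ≤ #(closedNbhdFinset G v ∩ S)) {v : V} (hv : v ∉ tightSet G S) :
    closedNbhdFinset G v ⊆ S := by
  have h4 : #(closedNbhdFinset G v) ≤ #(closedNbhdFinset G v ∩ S) := by
    have := card_closedNbhdFinset_inter_le hreg (S := S) v
    have := hdom v
    rw [mem_tightSet] at hv
    rw [card_closedNbhdFinset, hreg v]
    omega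
  exact inter_eq_left.1 (eq_of_subset_of_card_le inter_subset_left h4)

theorem card_closedNbhdFinset_inter_tightSet_le (hreg : G.IsRegularOfDegree 3)
    (hdom : ∀ v, 3 ≤ #(closedNbhdFinset G v ∩ S))
    (hsep : ∀ u v, u ≠ v →
      3 ≤ #((closedNbhdFinset G u ∩ S) ∆ (closedNbhdFinset G v ∩ S)))
    {v : V} (hvS : v ∈ S) : #(closedNbhdFinset G v ∩ tightSet G S) ≤ 3 := by
  by_cases hv : v ∈ tightSet G S
  · rw [card_closedNbhdFinset_inter_tightSet_of_mem hreg hdom hsep hvS hv]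
    omega
  · have hsub : closedNbhdFinset G v ∩ tightSet G S ⊆ (closedNbhdFinset G v).erase v :=
      fun u hu => mem_erase.2 ⟨fun h => hv (h ▸ (mem_inter.1 hu).2), (mem_inter.1 hu).1⟩
    simpa [card_erase_of_mem (self_mem_closedNbhdFinset v), card_closedNbhdFinset, hreg v]
      using card_le_card hsub

theorem card_closedNbhdFinset_inter_code_tightSet (hreg : G.IsRegularOfDegree 3)
    (hdom : ∀ v, 3 ≤ #(closedNbhdFinset G v ∩ S))
    (hsep : ∀ u v, u ≠ v →
      3 ≤ #((closedNbhdFinset G u ∩ S) ∆ (closedNbhdFinset G v ∩ S)))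
    {v : V} (hvS : v ∈ S) (h3 : #(closedNbhdFinset G v ∩ tightSet G S) = 3) :
    #(closedNbhdFinset G v ∩ (S ∩ tightSet G S)) = 3 := by
  have hv : v ∉ tightSet G S := fun hv => by
    rw [card_closedNbhdFinset_inter_tightSet_of_mem hreg hdom hsep hvS hv] at h3
    omega
  rwa [← inter_assoc, inter_eq_left.2 (closedNbhdFinset_subset_of_notMem_tightSet hreg hdom hv)]

theorem card_closedNbhdFinset_inter_filter_le_two (hreg : G.IsRegularOfDegree 3)
    (hdom : ∀ v, 3 ≤ #(closedNbhdFinset G v ∩ S))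
    (hsep : ∀ u v, u ≠ v →
      3 ≤ #((closedNbhdFinset G u ∩ S) ∆ (closedNbhdFinset G v ∩ S)))
    {v : V} (hvS : v ∈ S) (hv : v ∈ tightSet G S) :
    #(closedNbhdFinset G v ∩ {u ∈ S | #(closedNbhdFinset G u ∩ tightSet G S) = 3}) ≤ 2 := by
  obtain ⟨q, hq, hqS⟩ := exists_notMem_of_mem_tightSet hreg hv
  have hqv : q ≠ v := fun h => hqS (h ▸ hvS)
  have hsub : closedNbhdFinset G v ∩ {u ∈ S | #(closedNbhdFinset G u ∩ tightSet G S) = 3} ⊆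
      ((closedNbhdFinset G v).erase q).erase v := by
    intro u hu
    simp only [mem_inter, mem_filter] at hu
    obtain ⟨hu, huS, hu3⟩ := hu
    refine mem_erase.2 ⟨fun huv => ?_, mem_erase.2 ⟨fun huq => hqS (huq ▸ huS), hu⟩⟩
    rw [huv, card_closedNbhdFinset_inter_tightSet_of_mem hreg hdom hsep hvS hv] at hu3
    omega
  simpa [card_erase_of_mem (mem_erase.2 ⟨hqv.symm, self_mem_closedNbhdFinset v⟩),
    card_erase_of_mem hq, card_closedNbhdFinset, hreg v] using card_le_card hsub

theorem five_mul_card_tightSet_le (hreg : G.IsRegularOfDegree 3)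
    (hdom : ∀ v, 3 ≤ #(closedNbhdFinset G v ∩ S))
    (hsep : ∀ u v, u ≠ v →
      3 ≤ #((closedNbhdFinset G u ∩ S) ∆ (closedNbhdFinset G v ∩ S))) :
    5 * #(tightSet G S) ≤ 4 * #S := by
  set S₃ := {u ∈ S | #(closedNbhdFinset G u ∩ tightSet G S) = 3}
  set R := {u ∈ S | ¬ #(closedNbhdFinset G u ∩ tightSet G S) = 3}
  have hT : ∑ u ∈ S, #(closedNbhdFinset G u ∩ tightSet G S) = 3 * #(tightSet G S) := by
    rw [sum_card_closedNbhdFinset_inter_comm, sum_congr rfl fun v hv => mem_tightSet.1 hv,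
      sum_const, smul_eq_mul, mul_comm]
  have hsplit : ∑ u ∈ S, #(closedNbhdFinset G u ∩ tightSet G S) ≤ 3 * #S₃ + 2 * #R := by
    rw [← sum_filter_add_sum_filter_not S fun u => #(closedNbhdFinset G u ∩ tightSet G S) = 3]
    gcongr
    · rw [mul_comm, ← smul_eq_mul]
      exact sum_le_card_nsmul _ _ _ fun u hu => (mem_filter.1 hu).2.le
    · rw [mul_comm, ← smul_eq_mul]
      refine sum_le_card_nsmul _ _ _ fun u hu => ?_
      have := card_closedNbhdFinset_inter_tightSet_le hreg hdom hsep (mem_filter.1 hu).1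
      have := (mem_filter.1 hu).2
      omega
  have hS₃ : 3 * #S₃ ≤ 2 * #(S ∩ tightSet G S) := calc
    3 * #S₃ ≤ ∑ u ∈ S₃, #(closedNbhdFinset G u ∩ (S ∩ tightSet G S)) := by
      rw [mul_comm, ← smul_eq_mul]
      exact card_nsmul_le_sum _ _ _ fun u hu =>
        (card_closedNbhdFinset_inter_code_tightSet hreg hdom hsep (mem_filter.1 hu).1
          (mem_filter.1 hu).2).ge
    _ = ∑ v ∈ S ∩ tightSet G S, #(closedNbhdFinset G v ∩ S₃) :=
      sum_card_closedNbhdFinset_inter_comm _ _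
    _ ≤ 2 * #(S ∩ tightSet G S) := by
      rw [mul_comm, ← smul_eq_mul]
      exact sum_le_card_nsmul _ _ _ fun v hv =>
        card_closedNbhdFinset_inter_filter_le_two hreg hdom hsep (mem_inter.1 hv).1
          (mem_inter.1 hv).2
  have hR : #(S ∩ tightSet G S) ≤ #R := card_le_card fun v hv => by
    obtain ⟨hvS, hv⟩ := mem_inter.1 hv
    simp [R, hvS, card_closedNbhdFinset_inter_tightSet_of_mem hreg hdom hsep hvS hv]
  have : #S₃ + #R = #S := card_filter_add_card_filter_not _
  omega

end CubicCode

theorem stmt18 [Fintype V] (G : SimpleGraph V)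
    (hreg : ∀ v : V, (G.neighborSet v).ncard = 3)
    (S : Set V) (hS : IsErrIC G S) :
    (5 : ℚ) / 6 * (Fintype.card V : ℚ) ≤ (S.ncard : ℚ) := by
  classical
  obtain ⟨S, rfl⟩ := S.toFinite.exists_finset_coe
  have hcubic : G.IsRegularOfDegree 3 := fun v => by
    rw [← card_neighborFinset_eq_degree, ← Set.ncard_coe_finset, coe_neighborFinset, hreg]
  obtain ⟨hdom, hsep⟩ := isErrIC_coe_iff.1 hS
  have hT := card_tightSet_add_four_mul_card hcubic hdom
  have h5 := five_mul_card_tightSet_le hcubic hdom hsep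
  rw [Set.ncard_coe_finset, div_mul_eq_mul_div, div_le_iff₀ (by norm_num)]
  exact_mod_cast (by omega : 5 * Fintype.card V ≤ #S * 6)
end

section
/- If S is an error-correcting identifying code for the infinite ladder graph P_∞ □ P_2, then the lower density of S is at least 7/8; moreover there exists an error-correcting identifying code of density exactly 7/8 (e.g., a period-8 pattern omitting one vertex from each rung-block of 8). -/
/-!
Every closed neighbourhood in the ladder is a set of four vertices spanning three consecutive
columns, and for two distinct vertices in equal or adjacent columns the symmetric difference of
their closed neighbourhoods is again a set of four vertices inside four consecutive columns, while
vertices two or more columns apart share at most one neighbour. Hence `S` is an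
error-correcting identifying code iff each of these windows misses at most one vertex of `S`, and
since every pair of vertices at most three columns apart lies in a common window, this happens iff
any two vertices outside `S` lie at least four columns apart. A ball of radius `r ≥ 1` consists of
`4r` vertices in `2r + 1` columns, so it misses at most `r / 2 + 1` vertices of such an `S`, giving
density at least `7/8`; omitting the vertices `(4k, false)` attains it.
-/

open SimpleGraph

variable {V : Type*}

/-- The infinite ladder graph `P_∞ □ P_2` on vertex set `ℤ × Bool`. -/
def ladder : SimpleGraph (ℤ × Bool) :=
  SimpleGraph.fromRel (fun u v =>
    (u.2 = v.2 ∧ v.1 = u.1 + 1) ∨ (u.1 = v.1 ∧ u.2 ≠ v.2))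

/-- The ball of radius `r` about `v` in `G`. -/
def gball (G : SimpleGraph V) (v : V) (r : ℕ) : Set V :=
  {u : V | G.edist v u ≤ (r : ℕ∞)}

open Filter Topology

theorem ladder_adj {i j : ℤ} {b c : Bool} :
    ladder.Adj (i, b) (j, c) ↔ (b = c ∧ (j = i + 1 ∨ i = j + 1)) ∨ (i = j ∧ b ≠ c) := by
  simp only [ladder, fromRel_adj, ne_eq, Prod.mk.injEq]
  cases b <;> cases c <;> simp <;> omega

theorem ladder_eq_boxProd : ladder = hasse ℤ □ (⊤ : SimpleGraph Bool) := by
  ext ⟨i, b⟩ ⟨j, c⟩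
  rw [ladder_adj, boxProd_adj, hasse_adj, Order.covBy_iff_add_one_eq,
    Order.covBy_iff_add_one_eq, top_adj]
  cases b <;> cases c <;> simp <;> omega

theorem edist_hasse_int_add_le (i : ℤ) (n : ℕ) : (hasse ℤ).edist i (i + n) ≤ n := by
  induction n with
  | zero => simp
  | succ n ih =>
    have hadj : (hasse ℤ).Adj (i + n) (i + (n + 1 : ℕ)) := by
      rw [hasse_adj, Order.covBy_iff_add_one_eq]; left; push_cast; ring
    calc (hasse ℤ).edist i (i + (n + 1 : ℕ))
        ≤ (hasse ℤ).edist i (i + n) + (hasse ℤ).edist (i + n) (i + (n + 1 : ℕ)) :=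
          (hasse ℤ).edist_triangle
      _ ≤ n + 1 := by rw [edist_eq_one_iff_adj.mpr hadj]; gcongr
      _ = (n + 1 : ℕ) := by push_cast; rfl

theorem natAbs_sub_le_length_of_walk_hasse {i j : ℤ} (p : (hasse ℤ).Walk i j) :
    (i - j).natAbs ≤ p.length := by
  induction p with
  | nil => simp
  | cons h p ih =>
    rw [hasse_adj, Order.covBy_iff_add_one_eq, Order.covBy_iff_add_one_eq] at h
    rw [Walk.length_cons]
    omega

theorem edist_hasse_int (i j : ℤ) : (hasse ℤ).edist i j = (i - j).natAbs := by
  refine le_antisymm ?_ ?_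
  · wlog h : i ≤ j generalizing i j
    · rw [SimpleGraph.edist_comm, ← Int.natAbs_neg, neg_sub]
      exact this j i (by omega)
    obtain ⟨n, rfl⟩ := Int.le.dest h
    simpa using edist_hasse_int_add_le i n
  · obtain ⟨p, hp⟩ := (hasse_preconnected_of_succ ℤ i j).exists_walk_length_eq_edist
    rw [← hp]
    exact_mod_cast natAbs_sub_le_length_of_walk_hasse p

theorem ladder_edist (u v : ℤ × Bool) :
    ladder.edist u v = (u.1 - v.1).natAbs + if u.2 = v.2 then 0 else 1 := by
  rw [ladder_eq_boxProd, edist_boxProd, edist_hasse_int, edist_top]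

theorem mem_gball_ladder {i j : ℤ} {b c : Bool} {r : ℕ} :
    (j, c) ∈ gball ladder (i, b) r ↔ (i - j).natAbs + (if b = c then 0 else 1) ≤ r := by
  change ladder.edist _ _ ≤ _ ↔ _
  rw [ladder_edist]
  split_ifs <;> norm_cast

theorem gball_ladder_eq (i : ℤ) (b : Bool) (r : ℕ) :
    gball ladder (i, b) r =
      ↑(Finset.Icc (i - r) (i + r) ×ˢ {b} ∪
        Finset.Icc (i - r + 1) (i + r - 1) ×ˢ {!b}) := by
  ext ⟨j, c⟩
  rw [mem_gball_ladder]
  simp only [Finset.coe_union, Finset.coe_product, Finset.coe_Icc, Finset.coe_singleton,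
    Set.mem_union, Set.mem_prod, Set.mem_Icc, Set.mem_singleton_iff]
  cases b <;> cases c <;> simp <;> omega

theorem gball_ladder_finite (v : ℤ × Bool) (r : ℕ) : (gball ladder v r).Finite := by
  rw [gball_ladder_eq]
  exact Finset.finite_toSet _

theorem ncard_gball_ladder (v : ℤ × Bool) {r : ℕ} (hr : 1 ≤ r) :
    (gball ladder v r).ncard = 4 * r := by
  obtain ⟨i, b⟩ := v
  rw [gball_ladder_eq, Set.ncard_coe_finset, Finset.card_union_of_disjoint, Finset.card_product,
    Finset.card_product, Finset.card_singleton, Finset.card_singleton, Int.card_Icc,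
    Int.card_Icc]
  · omega
  · exact Finset.disjoint_product.mpr (Or.inr (by simp))

theorem closedNbhd_ladder (i : ℤ) (b : Bool) :
    closedNbhd ladder (i, b) = {(i - 1, b), (i, b), (i + 1, b), (i, !b)} := by
  ext ⟨j, c⟩
  simp only [closedNbhd, Set.mem_insert_iff, mem_neighborSet, ladder_adj,
    Set.mem_singleton_iff, Prod.mk.injEq]
  cases b <;> cases c <;> simp <;> omega

theorem closedNbhd_ladder_finite (v : ℤ × Bool) : (closedNbhd ladder v).Finite := by
  rw [closedNbhd_ladder]
  exact Set.toFinite _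

theorem symmDiff_closedNbhd_ladder_not (i : ℤ) (b : Bool) :
    symmDiff (closedNbhd ladder (i, b)) (closedNbhd ladder (i, !b)) =
      {(i - 1, b), (i + 1, b), (i - 1, !b), (i + 1, !b)} := by
  rw [closedNbhd_ladder, closedNbhd_ladder]
  ext ⟨j, c⟩
  simp only [Set.mem_symmDiff, Set.mem_insert_iff, Set.mem_singleton_iff, Prod.mk.injEq]
  cases b <;> cases c <;> simp <;> omega

theorem symmDiff_closedNbhd_ladder_succ (i : ℤ) (b : Bool) :
    symmDiff (closedNbhd ladder (i, b)) (closedNbhd ladder (i + 1, b)) =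
      {(i - 1, b), (i + 2, b), (i, !b), (i + 1, !b)} := by
  rw [closedNbhd_ladder, closedNbhd_ladder]
  ext ⟨j, c⟩
  simp only [Set.mem_symmDiff, Set.mem_insert_iff, Set.mem_singleton_iff, Prod.mk.injEq]
  cases b <;> cases c <;> simp <;> omega

theorem symmDiff_closedNbhd_ladder_succ_not (i : ℤ) (b : Bool) :
    symmDiff (closedNbhd ladder (i, b)) (closedNbhd ladder (i + 1, !b)) =
      {(i - 1, b), (i, b), (i + 1, !b), (i + 2, !b)} := by
  rw [closedNbhd_ladder, closedNbhd_ladder]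
  ext ⟨j, c⟩
  simp only [Set.mem_symmDiff, Set.mem_insert_iff, Set.mem_singleton_iff, Prod.mk.injEq]
  cases b <;> cases c <;> simp <;> omega

theorem closedNbhd_ladder_inter_subset {i j : ℤ} (b c : Bool) (h : i + 2 ≤ j) :
    closedNbhd ladder (i, b) ∩ closedNbhd ladder (j, c) ⊆ {(i + 1, b)} := by
  rw [closedNbhd_ladder, closedNbhd_ladder]
  rintro ⟨k, d⟩ ⟨h1, h2⟩
  simp only [Set.mem_insert_iff, Set.mem_singleton_iff, Prod.mk.injEq] at *
  cases b <;> cases c <;> cases d <;> simp_all <;> omega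

theorem ncard_four {α : Type*} {a b c d : α}
    (h : a ≠ b ∧ a ≠ c ∧ a ≠ d ∧ b ≠ c ∧ b ≠ d ∧ c ≠ d) :
    ({a, b, c, d} : Set α).ncard = 4 := by
  obtain ⟨hab, hac, had, hbc, hbd, hcd⟩ := h
  rw [Set.ncard_insert_of_notMem (by simp [hab, hac, had]),
    Set.ncard_insert_of_notMem (by simp [hbc, hbd]), Set.ncard_pair hcd]

theorem subsingleton_sdiff_of_three_le_ncard_inter {α : Type*} {a b c d : α} {S : Set α}
    (h : 3 ≤ (({a, b, c, d} : Set α) ∩ S).ncard) :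
    (({a, b, c, d} : Set α) \ S).Subsingleton := by
  have hW : ({a, b, c, d} : Set α).ncard ≤ 4 := by
    have := Set.ncard_insert_le a {b, c, d}
    have := Set.ncard_insert_le b {c, d}
    have := Set.ncard_insert_le c {d}
    rw [Set.ncard_singleton] at *
    omega
  have := Set.ncard_inter_add_ncard_sdiff_eq_ncard ({a, b, c, d} : Set α) S
  rw [← Set.ncard_le_one_iff_subsingleton]
  omega

theorem ncard_symmDiff_add_two_mul_ncard_inter {α : Type*} {X Y : Set α} (hX : X.Finite)
    (hY : Y.Finite) : (symmDiff X Y).ncard + 2 * (X ∩ Y).ncard = X.ncard + Y.ncard := by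
  rw [Set.symmDiff_def, Set.ncard_union_eq disjoint_sdiff_sdiff hX.sdiff hY.sdiff,
    ← Set.ncard_inter_add_ncard_sdiff_eq_ncard X Y hX,
    ← Set.ncard_inter_add_ncard_sdiff_eq_ncard Y X hY, Set.inter_comm Y X]
  ring

def FourApart (T : Set (ℤ × Bool)) : Prop :=
  T.Pairwise fun u v => 4 ≤ (u.1 - v.1).natAbs

theorem FourApart.ncard_le {T : Set (ℤ × Bool)} (hT : FourApart T) {lo : ℤ} {n : ℕ}
    (hcol : ∀ p ∈ T, lo ≤ p.1 ∧ p.1 ≤ lo + n) : T.ncard ≤ n / 4 + 1 := by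
  calc T.ncard ≤ (Set.Icc (0 : ℤ) (n / 4 : ℕ)).ncard := by
        refine Set.ncard_le_ncard_of_injOn (fun p => (p.1 - lo) / 4) ?_ ?_ (Set.finite_Icc _ _)
        · intro p hp
          have := hcol p hp
          simp only [Set.mem_Icc]
          omega
        · intro p hp q hq hpq
          by_contra hne
          have := hT hp hq hne
          have := hcol p hp
          have := hcol q hq
          simp only at hpq
          omega
    _ = n / 4 + 1 := by
        rw [← Finset.coe_Icc, Set.ncard_coe_finset, Int.card_Icc]
        omega

section Codes

variable {S : Set (ℤ × Bool)}

theorem three_le_ncard_inter_of_fourApart (hS : FourApart Sᶜ) {p q r s : ℤ × Bool}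
    (hne : p ≠ q ∧ p ≠ r ∧ p ≠ s ∧ q ≠ r ∧ q ≠ s ∧ r ≠ s) (lo : ℤ)
    (hcol : ∀ x ∈ ({p, q, r, s} : Set (ℤ × Bool)), lo ≤ x.1 ∧ x.1 ≤ lo + 3) :
    3 ≤ (({p, q, r, s} : Set (ℤ × Bool)) ∩ S).ncard := by
  have holes : (({p, q, r, s} : Set (ℤ × Bool)) \ S).ncard ≤ 1 :=
    FourApart.ncard_le (n := 3) (hS.mono fun _ hx => hx.2) fun x hx => hcol x hx.1
  have := Set.ncard_inter_add_ncard_sdiff_eq_ncard ({p, q, r, s} : Set (ℤ × Bool)) S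
  rw [ncard_four hne] at this
  omega

theorem isErrIC_of_fourApart (hS : FourApart Sᶜ) : IsErrIC ladder S := by
  have hdom : ∀ v, 3 ≤ (closedNbhd ladder v ∩ S).ncard := by
    rintro ⟨i, b⟩
    rw [closedNbhd_ladder]
    refine three_le_ncard_inter_of_fourApart hS ?_ (i - 1) ?_ <;> grind
  refine ⟨hdom, ?_⟩
  suffices key : ∀ a c b d, (a, b) ≠ (c, d) → a ≤ c →
      3 ≤ (symmDiff (closedNbhd ladder (a, b) ∩ S) (closedNbhd ladder (c, d) ∩ S)).ncard by
    rintro ⟨a, b⟩ ⟨c, d⟩ hne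
    rcases le_total a c with h | h
    · exact key a c b d hne h
    · rw [symmDiff_comm]
      exact key c a d b hne.symm h
  intro a c b d hne hac
  obtain hfar | hnear : a + 2 ≤ c ∨ c ≤ a + 1 := by omega
  · have hX := hdom (a, b)
    have hY := hdom (c, d)
    have hXY :
        (closedNbhd ladder (a, b) ∩ S ∩ (closedNbhd ladder (c, d) ∩ S)).ncard ≤ 1 := by
      refine (Set.ncard_le_ncard ?_ (Set.finite_singleton (a + 1, b))).trans_eq
        (Set.ncard_singleton _)
      exact fun x hx => closedNbhd_ladder_inter_subset b d hfar ⟨hx.1.1, hx.2.1⟩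
    have := ncard_symmDiff_add_two_mul_ncard_inter (X := closedNbhd ladder (a, b) ∩ S)
      (Y := closedNbhd ladder (c, d) ∩ S) ((closedNbhd_ladder_finite _).inter_of_left S)
      ((closedNbhd_ladder_finite _).inter_of_left S)
    omega
  rw [← Set.inter_symmDiff_distrib_right]
  obtain rfl | rfl : a = c ∨ c = a + 1 := by omega
  · obtain rfl : d = !b := by cases b <;> cases d <;> simp_all
    rw [symmDiff_closedNbhd_ladder_not]
    refine three_le_ncard_inter_of_fourApart hS ?_ (a - 1) ?_ <;> grind
  · obtain rfl | rfl : b = d ∨ d = !b := by cases b <;> cases d <;> simp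
    · rw [symmDiff_closedNbhd_ladder_succ]
      refine three_le_ncard_inter_of_fourApart hS ?_ (a - 1) ?_ <;> grind
    · rw [symmDiff_closedNbhd_ladder_succ_not]
      refine three_le_ncard_inter_of_fourApart hS ?_ (a - 1) ?_ <;> grind

theorem fourApart_compl_of_isErrIC (hS : IsErrIC ladder S) : FourApart Sᶜ := by
  have hN (i : ℤ) (b : Bool) : ({(i - 1, b), (i, b), (i + 1, b), (i, !b)} \ S).Subsingleton :=
    subsingleton_sdiff_of_three_le_ncard_inter (closedNbhd_ladder i b ▸ hS.1 (i, b))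
  have hΔ (u v : ℤ × Bool) (huv : u ≠ v) :
      3 ≤ (symmDiff (closedNbhd ladder u) (closedNbhd ladder v) ∩ S).ncard := by
    rw [Set.inter_symmDiff_distrib_right]
    exact hS.2 u v huv
  have hΔnot (i : ℤ) (b : Bool) :
      ({(i - 1, b), (i + 1, b), (i - 1, !b), (i + 1, !b)} \ S).Subsingleton :=
    subsingleton_sdiff_of_three_le_ncard_inter
      (symmDiff_closedNbhd_ladder_not i b ▸ hΔ _ _ (by simp))
  have hΔsucc (i : ℤ) (b : Bool) :
      ({(i - 1, b), (i + 2, b), (i, !b), (i + 1, !b)} \ S).Subsingleton :=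
    subsingleton_sdiff_of_three_le_ncard_inter
      (symmDiff_closedNbhd_ladder_succ i b ▸ hΔ _ _ (by simp))
  have hΔsuccNot (i : ℤ) (b : Bool) :
      ({(i - 1, b), (i, b), (i + 1, !b), (i + 2, !b)} \ S).Subsingleton :=
    subsingleton_sdiff_of_three_le_ncard_inter
      (symmDiff_closedNbhd_ladder_succ_not i b ▸ hΔ _ _ (by simp))
  suffices key :
      ∀ a c b d, (a, b) ∉ S → (c, d) ∉ S → a ≤ c → c ≤ a + 3 → (a, b) = (c, d) by
    rintro ⟨a, b⟩ hu ⟨c, d⟩ hv hne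
    by_contra hlt
    rcases le_total a c with h | h
    · exact hne (key a c b d hu hv h (by omega))
    · exact hne (key c a d b hv hu h (by omega)).symm
  intro a c b d hu hv hac hca
  obtain rfl | rfl : b = d ∨ d = !b := by cases b <;> cases d <;> simp
  all_goals
    obtain rfl | rfl | rfl | rfl : a = c ∨ c = a + 1 ∨ c = a + 2 ∨ c = a + 3 := by omega
  · rfl
  · exact hN a b ⟨by grind, hu⟩ ⟨by grind, hv⟩
  · exact hΔnot (a + 1) b ⟨by grind, hu⟩ ⟨by grind, hv⟩
  · exact hΔsucc (a + 1) b ⟨by grind, hu⟩ ⟨by grind, hv⟩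
  · exact hN a b ⟨by grind, hu⟩ ⟨by grind, hv⟩
  · exact hΔsucc (a + 1) b ⟨by grind, hu⟩ ⟨by grind, hv⟩
  · exact hΔnot (a + 1) b ⟨by grind, hu⟩ ⟨by grind, hv⟩
  · exact hΔsuccNot (a + 1) b ⟨by grind, hu⟩ ⟨by grind, hv⟩

theorem isErrIC_ladder_iff : IsErrIC ladder S ↔ FourApart Sᶜ :=
  ⟨fourApart_compl_of_isErrIC, isErrIC_of_fourApart⟩

end Codes

theorem tendsto_div_of_abs_sub_mul_le {x y : ℕ → ℝ} {c C : ℝ} (hy : Tendsto y atTop atTop)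
    (hxy : ∀ᶠ n in atTop, |x n - c * y n| ≤ C) :
    Tendsto (fun n => x n / y n) atTop (𝓝 c) := by
  rw [tendsto_iff_norm_sub_tendsto_zero]
  refine squeeze_zero' (Eventually.of_forall fun n => norm_nonneg _) ?_
    ((tendsto_const_nhds (x := C)).div_atTop hy)
  filter_upwards [hxy, hy.eventually_gt_atTop 0] with n hn hpos
  rw [Real.norm_eq_abs, show x n / y n - c = (x n - c * y n) / y n by field_simp, abs_div,
    abs_of_pos hpos]
  exact div_le_div_of_nonneg_right hn hpos.le

theorem le_liminf_div_of_le {x y : ℕ → ℝ} {c C : ℝ} (hy : Tendsto y atTop atTop)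
    (hlow : ∀ᶠ n in atTop, c * y n - C ≤ x n) (hle : ∀ᶠ n in atTop, x n ≤ y n) :
    c ≤ liminf (fun n => x n / y n) atTop := by
  have hg : Tendsto (fun n => c - C / y n) atTop (𝓝 c) := by
    simpa using tendsto_const_nhds.sub (tendsto_const_nhds.div_atTop hy)
  rw [← hg.liminf_eq]
  refine liminf_le_liminf ?_ hg.isBoundedUnder_ge
    (isCoboundedUnder_ge_of_eventually_le atTop (x := 1) ?_)
  · filter_upwards [hlow, hy.eventually_gt_atTop 0] with n hn hpos
    rw [le_div_iff₀ hpos, sub_mul, div_mul_cancel₀ _ hpos.ne']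
    exact hn
  · filter_upwards [hle, hy.eventually_gt_atTop 0] with n hn hpos
    exact (div_le_one hpos).2 hn

noncomputable def ballDensity {V : Type*} (G : SimpleGraph V) (S : Set V) (v : V) (r : ℕ) : ℝ :=
  ((S ∩ gball G v r).ncard : ℝ) / ((gball G v r).ncard : ℝ)

theorem tendsto_ncard_gball_ladder (v : ℤ × Bool) :
    Tendsto (fun r : ℕ => ((gball ladder v r).ncard : ℝ)) atTop atTop := by
  refine (tendsto_natCast_atTop_atTop.const_mul_atTop (by norm_num : (0 : ℝ) < 4)).congr' ?_
  filter_upwards [eventually_ge_atTop 1] with r hr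
  rw [ncard_gball_ladder v hr]
  push_cast
  rfl

theorem ncard_inter_gball_ladder_add_ncard_sdiff (S : Set (ℤ × Bool)) (v : ℤ × Bool) {r : ℕ}
    (hr : 1 ≤ r) : (S ∩ gball ladder v r).ncard + (gball ladder v r \ S).ncard = 4 * r := by
  rw [Set.inter_comm, Set.ncard_inter_add_ncard_sdiff_eq_ncard _ _ (gball_ladder_finite v r),
    ncard_gball_ladder v hr]

section Density

variable {S : Set (ℤ × Bool)}

theorem ncard_gball_ladder_sdiff_le (hS : FourApart Sᶜ) (v : ℤ × Bool) (r : ℕ) :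
    (gball ladder v r \ S).ncard ≤ r / 2 + 1 := by
  obtain ⟨i, b⟩ := v
  have := FourApart.ncard_le (T := gball ladder (i, b) r \ S) (hS.mono fun _ hx => hx.2)
    (lo := i - r) (n := 2 * r)
    fun ⟨j, c⟩ hp => by
      have := mem_gball_ladder.1 hp.1
      split_ifs at this <;> omega
  omega

theorem le_liminf_ballDensity_ladder (hS : IsErrIC ladder S) (v : ℤ × Bool) :
    (7 : ℝ) / 8 ≤ liminf (ballDensity ladder S v) atTop := by
  refine le_liminf_div_of_le (C := 1) (tendsto_ncard_gball_ladder v) ?_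
    (Eventually.of_forall fun r => ?_)
  · filter_upwards [eventually_ge_atTop 1] with r hr
    have h1 := ncard_inter_gball_ladder_add_ncard_sdiff S v hr
    have h2 := ncard_gball_ladder_sdiff_le (isErrIC_ladder_iff.1 hS) v r
    have h3 : 7 * r ≤ 2 * (S ∩ gball ladder v r).ncard + 2 := by omega
    rw [ncard_gball_ladder v hr]
    have := (Nat.cast_le (α := ℝ)).2 h3
    push_cast at this ⊢
    linarith
  · exact Nat.cast_le.2 (Set.ncard_le_ncard Set.inter_subset_right (gball_ladder_finite v r))

end Density

def everyFourthColumn : Set (ℤ × Bool) := Set.range fun k : ℤ => (4 * k, false)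

theorem fourApart_everyFourthColumn : FourApart everyFourthColumn := by
  rintro _ ⟨k, rfl⟩ _ ⟨l, rfl⟩ hne
  have : k ≠ l := fun h => hne (h ▸ rfl)
  simp only
  omega

theorem isErrIC_compl_everyFourthColumn : IsErrIC ladder everyFourthColumnᶜ :=
  isErrIC_ladder_iff.2 ((compl_compl everyFourthColumn).symm ▸ fourApart_everyFourthColumn)

theorem le_ncard_gball_ladder_inter_everyFourthColumn (v : ℤ × Bool) (r : ℕ) :
    r ≤ 2 * (gball ladder v r ∩ everyFourthColumn).ncard + 2 := by
  obtain ⟨i, b⟩ := v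
  have hinj : Function.Injective fun k : ℤ => (4 * k, false) := fun k l h => by
    simp only [Prod.mk.injEq] at h
    omega
  -- the `k` with `i - r < 4 * k < i + r`
  calc r ≤ 2 * (Set.Icc ((i - r + 4) / 4) ((i + r - 1) / 4)).ncard + 2 := by
        rw [← Finset.coe_Icc, Set.ncard_coe_finset, Int.card_Icc]
        omega
    _ ≤ 2 * (gball ladder (i, b) r ∩ everyFourthColumn).ncard + 2 := by
        rw [← Set.ncard_image_of_injective _ hinj]
        gcongr
        · exact (gball_ladder_finite _ _).inter_of_left _
        rintro _ ⟨k, hk, rfl⟩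
        refine ⟨mem_gball_ladder.2 ?_, k, rfl⟩
        rw [Set.mem_Icc] at hk
        split_ifs <;> omega

theorem tendsto_ballDensity_ladder_compl_everyFourthColumn (v : ℤ × Bool) :
    Tendsto (ballDensity ladder everyFourthColumnᶜ v) atTop (𝓝 (7 / 8)) := by
  refine tendsto_div_of_abs_sub_mul_le (C := 1) (tendsto_ncard_gball_ladder v) ?_
  filter_upwards [eventually_ge_atTop 1] with r hr
  have h1 := ncard_inter_gball_ladder_add_ncard_sdiff everyFourthColumnᶜ v hr
  have h2 := ncard_gball_ladder_sdiff_le (isErrIC_ladder_iff.1 isErrIC_compl_everyFourthColumn) v r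
  have h3 := le_ncard_gball_ladder_inter_everyFourthColumn v r
  rw [Set.sdiff_compl] at h1 h2
  have h4 : 7 * r ≤ 2 * (everyFourthColumnᶜ ∩ gball ladder v r).ncard + 2 := by omega
  have h5 : 2 * (everyFourthColumnᶜ ∩ gball ladder v r).ncard ≤ 7 * r + 2 := by omega
  have := (Nat.cast_le (α := ℝ)).2 h4
  have := (Nat.cast_le (α := ℝ)).2 h5
  rw [ncard_gball_ladder v hr, abs_le]
  push_cast at *
  constructor <;> linarith

theorem stmt19 :
    (∀ S : Set (ℤ × Bool), IsErrIC ladder S → ∀ v : ℤ × Bool,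
      (7 : ℝ) / 8 ≤ Filter.liminf (fun r : ℕ =>
        ((S ∩ gball ladder v r).ncard : ℝ) / ((gball ladder v r).ncard : ℝ))
        Filter.atTop) ∧
    (∃ S : Set (ℤ × Bool), IsErrIC ladder S ∧ ∀ v : ℤ × Bool,
      Filter.Tendsto (fun r : ℕ =>
        ((S ∩ gball ladder v r).ncard : ℝ) / ((gball ladder v r).ncard : ℝ))
        Filter.atTop (nhds ((7 : ℝ) / 8))) :=
  ⟨fun _ hS v => le_liminf_ballDensity_ladder hS v,
    everyFourthColumnᶜ, isErrIC_compl_everyFourthColumn,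
    tendsto_ballDensity_ladder_compl_everyFourthColumn⟩
end
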